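/- arXiv:math/0510607 — 6 statements merged into one kernel-verified Lean document; each statement's English description precedes it below -/
import Mathlib

section
/- Let p, q ≥ 2 be coprime integers, r, s integers with ps − qr = 1, (α, β) an admissible pair, and (k⁻, k⁺) bifurcation parameters associated to (α, β). Then either p divides k⁺ + k⁻ and q divides k⁺ − k⁻, or q divides k⁺ + k⁻ and p divides k⁺ − k⁻. -/
/-- A pair `(a, b)` is admissible for `(p, q)` if `1 ≤ a ≤ p-1`, `1 ≤ b ≤ q-1`
and `a ≡ b (mod 2)`. -/
def Admissible (p q a b : ℤ) : Prop :=
  1 ≤ a ∧ a ≤ p - 1 ∧ 1 ≤ b ∧ b ≤ q - 1 ∧ Int.ModEq 2 a b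

/-- `(km, kp)` are bifurcation parameters associated to the admissible pair `(a, b)`:
`0 < km < kp < pq` and, for some signs `e, em, ep ∈ {±1}`,
`km ≡ em (b p s - e a q r) (mod pq)` and `kp ≡ ep (b p s + e a q r) (mod pq)`. -/
def BifParams (p q r s a b km kp : ℤ) : Prop :=
  0 < km ∧ km < kp ∧ kp < p * q ∧
    ∃ e em ep : ℤ, (e = 1 ∨ e = -1) ∧ (em = 1 ∨ em = -1) ∧ (ep = 1 ∨ ep = -1) ∧
      Int.ModEq (p * q) km (em * (b * p * s - e * a * q * r)) ∧
      Int.ModEq (p * q) kp (ep * (b * p * s + e * a * q * r))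

/-- Either `p ∣ k⁺ + k⁻` and `q ∣ k⁺ - k⁻`, or `q ∣ k⁺ + k⁻` and `p ∣ k⁺ - k⁻`. -/
theorem bifurcation_parameters_divisibility (p q r s : ℤ) (hp : 2 ≤ p) (hq : 2 ≤ q)
    (hpq : IsCoprime p q) (hrs : p * s - q * r = 1) (α β km kp : ℤ)
    (hadm : Admissible p q α β) (hbif : BifParams p q r s α β km kp) :
    (p ∣ kp + km ∧ q ∣ kp - km) ∨ (q ∣ kp + km ∧ p ∣ kp - km) := by
  obtain ⟨-, -, -, e, em, ep, he, hem, hep, hkm, hkp⟩ := hbif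
  obtain ⟨x, hx⟩ := hkm.dvd
  obtain ⟨y, hy⟩ := hkp.dvd
  rcases hem with rfl | rfl <;> rcases hep with rfl | rfl
  · exact Or.inl ⟨⟨2 * β * s - q * x - q * y, by linear_combination -hx - hy⟩,
      ⟨2 * e * α * r - p * y + p * x, by linear_combination hx - hy⟩⟩
  · exact Or.inr ⟨⟨-2 * e * α * r - p * x - p * y, by linear_combination -hx - hy⟩,
      ⟨-2 * β * s + q * x - q * y, by linear_combination hx - hy⟩⟩
  · exact Or.inr ⟨⟨2 * e * α * r - p * x - p * y, by linear_combination -hx - hy⟩,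
      ⟨2 * β * s + q * x - q * y, by linear_combination hx - hy⟩⟩
  · exact Or.inl ⟨⟨-2 * β * s - q * x - q * y, by linear_combination -hx - hy⟩,
      ⟨-2 * e * α * r + p * x - p * y, by linear_combination hx - hy⟩⟩
end

section
/- Let p, q ≥ 2 be coprime integers and let k be an integer with 0 < k < pq such that p does not divide k and q does not divide k. Set z₀ = iπk/(pq) ∈ ℂ. Then the function z ↦ (z − z₀) · 2·sinh(pz)·sinh(qz)/sinh(pqz) tends, as z → z₀ with z ≠ z₀, to the value (−1)^{k−1}·(2/(pq))·sin(πk/p)·sin(πk/q), and this value is nonzero. -/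
/-!
At `z₀ = iπk/(pq)` the denominator `sinh(pqz)` vanishes with derivative
`pq·cosh(iπk) = pq·(-1)^k ≠ 0`, so `z₀` is a simple pole of `τ` and `(z - z₀)·τ(z)` tends to the
numerator `2·sinh(pz₀)·sinh(qz₀) = -2·sin(πk/q)·sin(πk/p)` divided by that derivative. The
sines are nonzero because neither `p` nor `q` divides `k`.
-/

open Real Complex Filter Topology

theorem HasDerivAt.tendsto_sub_mul_div_nhdsNE {𝕜 : Type*} [NontriviallyNormedField 𝕜]
    {f g : 𝕜 → 𝕜} {d z₀ : 𝕜} (hf : HasDerivAt f d z₀) (hf₀ : f z₀ = 0) (hd : d ≠ 0)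
    (hg : ContinuousAt g z₀) :
    Tendsto (fun z => (z - z₀) * (g z / f z)) (𝓝[≠] z₀) (𝓝 (g z₀ / d)) := by
  have hslope := (hasDerivAt_iff_tendsto_slope.mp hf).inv₀ hd
  rw [div_eq_mul_inv]
  refine ((hg.tendsto.mono_left nhdsWithin_le_nhds).mul hslope).congr fun z => ?_
  simp only [slope_def_field, hf₀, sub_zero, inv_div]
  ring

theorem Real.sin_pi_mul_div_ne_zero {n k : ℤ} (hn : n ≠ 0) (hk : ¬ n ∣ k) :
    Real.sin (π * k / n) ≠ 0 := by
  rw [Ne, Real.sin_eq_zero_iff]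
  rintro ⟨m, hm⟩
  rw [eq_div_iff (by exact_mod_cast hn)] at hm
  refine hk ⟨m, ?_⟩
  have : ((n * m : ℤ) : ℝ) * π = (k : ℝ) * π := by push_cast; linarith
  exact_mod_cast (mul_right_cancel₀ pi_ne_zero this).symm

theorem Complex.sinh_mul_I_pi_mul_div {p : ℤ} (q k : ℤ) (hp : p ≠ 0) :
    sinh (p * (I * π * k / (p * q))) = Real.sin (π * k / q) * I := by
  have hp' : (p : ℂ) ≠ 0 := by exact_mod_cast hp
  rw [ofReal_sin, ← sinh_mul_I]
  congr 1
  push_cast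
  field_simp

theorem Complex.cosh_int_mul_pi_mul_I (k : ℤ) : cosh (k * π * I) = (-1) ^ k := by
  rw [cosh_mul_I]
  have := congrArg ((↑) : ℝ → ℂ) (Real.cos_int_mul_pi k)
  push_cast at this
  exact this

theorem residue_abelian_torsion_general (p q : ℤ) (hp : 2 ≤ p) (hq : 2 ≤ q)
    (k : ℤ) (hkp : ¬ p ∣ k) (hkq : ¬ q ∣ k) :
    Tendsto
      (fun z : ℂ =>
        (z - Complex.I * (π : ℂ) * (k : ℂ) / ((p : ℂ) * q)) *
          (2 * Complex.sinh ((p : ℂ) * z) * Complex.sinh ((q : ℂ) * z) /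
            Complex.sinh ((p : ℂ) * q * z)))
      (nhdsWithin (Complex.I * (π : ℂ) * (k : ℂ) / ((p : ℂ) * q))
        {Complex.I * (π : ℂ) * (k : ℂ) / ((p : ℂ) * q)}ᶜ)
      (nhds ((-1 : ℂ) ^ (k - 1) * (2 / ((p : ℂ) * q)) *
        (Real.sin (π * k / p) : ℂ) * (Real.sin (π * k / q) : ℂ))) ∧
    (-1 : ℂ) ^ (k - 1) * (2 / ((p : ℂ) * q)) *
        (Real.sin (π * k / p) : ℂ) * (Real.sin (π * k / q) : ℂ) ≠ 0 := by
  have hp₀ : p ≠ 0 := by omega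
  have hq₀ : q ≠ 0 := by omega
  have hp' : (p : ℂ) ≠ 0 := by exact_mod_cast hp₀
  have hq' : (q : ℂ) ≠ 0 := by exact_mod_cast hq₀
  set z₀ : ℂ := I * π * k / (p * q) with hz₀
  have hpqz : (p : ℂ) * q * z₀ = k * π * I := by rw [hz₀]; field_simp
  have hsinh_p : sinh (p * z₀) = Real.sin (π * k / q) * I := sinh_mul_I_pi_mul_div q k hp₀
  have hsinh_q : sinh (q * z₀) = Real.sin (π * k / p) * I := by
    rw [← sinh_mul_I_pi_mul_div p k hq₀, mul_comm (q : ℂ) p]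
  have hderiv := ((hasDerivAt_id z₀).const_mul ((p : ℂ) * q)).csinh
  simp only [id, mul_one, hpqz, cosh_int_mul_pi_mul_I] at hderiv
  have hlim := hderiv.tendsto_sub_mul_div_nhdsNE (g := fun z : ℂ => 2 * sinh (p * z) * sinh (q * z))
    (by rw [hpqz, sinh_mul_I, Complex.sin_int_mul_pi, zero_mul])
    (mul_ne_zero (zpow_ne_zero _ (by norm_num)) (mul_ne_zero hp' hq')) (by fun_prop)
  have hvalue : 2 * sinh (p * z₀) * sinh (q * z₀) / ((-1) ^ k * (p * q)) =
      (-1 : ℂ) ^ (k - 1) * (2 / (p * q)) * Real.sin (π * k / p) * Real.sin (π * k / q) := by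
    have hsq : (-1 : ℂ) ^ k * (-1) ^ k = 1 := by rw [← mul_zpow]; norm_num
    rw [hsinh_p, hsinh_q, zpow_sub_one₀ (by norm_num)]
    field_simp
    linear_combination (Real.sin (π * k / q) * Real.sin (π * k / p) : ℂ) * (I_mul_I + hsq)
  refine ⟨hvalue ▸ hlim, mul_ne_zero (mul_ne_zero (mul_ne_zero ?_ ?_) ?_) ?_⟩
  · exact zpow_ne_zero _ (by norm_num)
  · simp [hp', hq']
  · exact ofReal_ne_zero.mpr (Real.sin_pi_mul_div_ne_zero hp₀ hkp)
  · exact ofReal_ne_zero.mpr (Real.sin_pi_mul_div_ne_zero hq₀ hkq)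

open Real Complex Filter in
/-- For `0 < k < pq` with `p ∤ k` and `q ∤ k`, the function
`z ↦ (z - z₀) · 2 sinh(pz) sinh(qz)/sinh(pqz)`, where `z₀ = iπk/(pq)`, tends (as
`z → z₀`, `z ≠ z₀`) to `(-1)^{k-1} (2/(pq)) sin(πk/p) sin(πk/q)`, which is nonzero. -/
theorem residue_abelian_torsion (p q : ℤ) (hp : 2 ≤ p) (hq : 2 ≤ q)
    (hpq : IsCoprime p q) (k : ℤ) (hk0 : 0 < k) (hk1 : k < p * q)
    (hkp : ¬ p ∣ k) (hkq : ¬ q ∣ k) :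
    Tendsto
      (fun z : ℂ =>
        (z - Complex.I * (π : ℂ) * (k : ℂ) / ((p : ℂ) * q)) *
          (2 * Complex.sinh ((p : ℂ) * z) * Complex.sinh ((q : ℂ) * z) /
            Complex.sinh ((p : ℂ) * q * z)))
      (nhdsWithin (Complex.I * (π : ℂ) * (k : ℂ) / ((p : ℂ) * q))
        {Complex.I * (π : ℂ) * (k : ℂ) / ((p : ℂ) * q)}ᶜ)
      (nhds ((-1 : ℂ) ^ (k - 1) * (2 / ((p : ℂ) * q)) *
        (Real.sin (π * k / p) : ℂ) * (Real.sin (π * k / q) : ℂ))) ∧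
    (-1 : ℂ) ^ (k - 1) * (2 / ((p : ℂ) * q)) *
        (Real.sin (π * k / p) : ℂ) * (Real.sin (π * k / q) : ℂ) ≠ 0 :=
  residue_abelian_torsion_general p q hp hq k hkp hkq
end

section
/- Let p, q ≥ 2 be coprime integers and let Π be the group with presentation ⟨a, b | aᵖ = b^q⟩. Let ρ : Π → SL(2, ℂ) be a representation whose induced action on ℂ² is irreducible. Then there exist integers α and β with 1 ≤ α ≤ p−1, 1 ≤ β ≤ q−1 and α ≡ β (mod 2) such that tr ρ(a) = 2·cos(απ/p) and tr ρ(b) = 2·cos(βπ/q). -/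
/-- The single relation `a^p b^{-q}` of the torus knot group `⟨a, b | a^p = b^q⟩`,
where `a` and `b` are the generators indexed by `true` and `false`. -/
def torusRels (p q : ℤ) : Set (FreeGroup Bool) :=
  {FreeGroup.of true ^ p * (FreeGroup.of false ^ q)⁻¹}

/-- The torus knot group `Π = ⟨a, b | a^p = b^q⟩`. -/
abbrev TorusGroup (p q : ℤ) := PresentedGroup (torusRels p q)

/-- A representation `ρ : G → SL(2,ℂ)` acts irreducibly on `ℂ²` if no one-dimensional
subspace of `ℂ²` is invariant under `ρ(g)` for all `g ∈ G`. -/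
def IrreducibleSL2 {G : Type} [Group G]
    (ρ : G →* Matrix.SpecialLinearGroup (Fin 2) ℂ) : Prop :=
  ¬ ∃ W : Submodule ℂ (Fin 2 → ℂ), Module.finrank ℂ W = 1 ∧
      ∀ g : G, ∀ v ∈ W, Matrix.mulVec ((ρ g : Matrix (Fin 2) (Fin 2) ℂ)) v ∈ W

/-!
Since `a^p = b^q`, the element `a^p` is central, so by Schur's lemma
`ρ(a)^p = ρ(b)^q = ε • 1`, and `ε = ±1` because `det = 1`. Neither `ρ(a)` nor `ρ(b)` is
scalar, since otherwise an eigenline of the other generator would be invariant. A non-scalar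
`A ∈ SL(2,ℂ)` with `A^n = ε • 1` is semisimple (`X^n - ε` is separable), so its eigenvalues
`λ, λ⁻¹` are distinct; they are `2n`-th roots of unity, so after possibly swapping them
`λ = exp(iπα/n)` with `0 < α < n`, whence `tr A = 2 cos(απ/n)` and `(-1)^α = λ^n = ε`.
The common `ε` forces `α ≡ β (mod 2)`.
-/

open Matrix Complex Polynomial
open scoped MatrixGroups

theorem Matrix.sq_sub_trace_smul_add_det_smul {R : Type*} [CommRing R]
    (A : Matrix (Fin 2) (Fin 2) R) :
    A ^ 2 - A.trace • A + A.det • (1 : Matrix (Fin 2) (Fin 2) R) = 0 := by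
  ext i j
  fin_cases i <;> fin_cases j <;>
    simp [sq, Matrix.mul_apply, Fin.sum_univ_two, trace_fin_two, det_fin_two] <;> ring

theorem Matrix.SpecialLinearGroup.coe_inv_fin_two {R : Type*} [CommRing R] (M : SL(2, R)) :
    ((M⁻¹ : SL(2, R)) : Matrix (Fin 2) (Fin 2) R) =
      (M : Matrix (Fin 2) (Fin 2) R).trace • 1 - M := by
  ext i j
  fin_cases i <;> fin_cases j <;> simp [coe_inv, adjugate_fin_two, trace_fin_two]

theorem Matrix.exists_mulVec_eq_smul {K n : Type*} [Field K] [IsAlgClosed K] [Fintype n]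
    [DecidableEq n] [Nonempty n] (A : Matrix n n K) :
    ∃ (μ : K) (v : n → K), v ≠ 0 ∧ A *ᵥ v = μ • v := by
  obtain ⟨μ, hμ⟩ := Module.End.exists_eigenvalue (toLin' A)
  obtain ⟨v, hv⟩ := hμ.exists_hasEigenvector
  exact ⟨μ, v, hv.2, by simpa using hv.apply_eq_smul⟩

theorem Module.End.eq_algebraMap_of_isNilpotent_sub_of_pow_eq {K M : Type*} [Field K]
    [CharZero K] [AddCommGroup M] [Module K M] {f : Module.End K M} {n : ℕ} (hn : n ≠ 0)
    {ε : K} (hε : ε ≠ 0) (hpow : f ^ n = algebraMap K _ ε) {μ : K}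
    (hnil : IsNilpotent (f - algebraMap K _ μ)) :
    f = algebraMap K _ μ := by
  have hf : f.IsSemisimple :=
    isSemisimple_of_squarefree_aeval_eq_zero
      (separable_X_pow_sub_C ε (Nat.cast_ne_zero.mpr hn) hε).squarefree (by simp [hpow])
  exact sub_eq_zero.mp (eq_zero_of_isNilpotent_isSemisimple hnil
    (isSemisimple_sub_algebraMap_iff.mpr hf))

theorem Matrix.eq_smul_one_of_isNilpotent_sub_of_pow_eq {K n : Type*} [Field K] [CharZero K]
    [Fintype n] [DecidableEq n] {A : Matrix n n K} {m : ℕ} (hm : m ≠ 0) {ε : K} (hε : ε ≠ 0)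
    (hpow : A ^ m = ε • 1) {μ : K} (hnil : IsNilpotent (A - μ • 1)) : A = μ • 1 := by
  simp only [← Algebra.algebraMap_eq_smul_one] at hpow hnil ⊢
  apply toLinAlgEquiv'.injective
  rw [AlgEquiv.commutes]
  refine Module.End.eq_algebraMap_of_isNilpotent_sub_of_pow_eq hm hε ?_ ?_
  · rw [← map_pow, hpow, AlgEquiv.commutes]
  · simpa [AlgEquiv.commutes] using hnil.map toLinAlgEquiv'

theorem Matrix.SpecialLinearGroup.mulVec_mem_of_closure_eq_top {G R : Type*} [Group G]
    [CommRing R] (ρ : G →* SL(2, R)) {S : Set G} (hS : Subgroup.closure S = ⊤)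
    {W : Submodule R (Fin 2 → R)}
    (hW : ∀ s ∈ S, ∀ v ∈ W, (ρ s : Matrix (Fin 2) (Fin 2) R) *ᵥ v ∈ W)
    (g : G) : ∀ v ∈ W, (ρ g : Matrix (Fin 2) (Fin 2) R) *ᵥ v ∈ W := by
  have hg : g ∈ Subgroup.closure S := hS ▸ Subgroup.mem_top g
  induction hg using Subgroup.closure_induction with
  | mem s hs => exact hW s hs
  | one => simp
  | mul g h _ _ hg hh =>
    intro v hv
    simpa [← mulVec_mulVec] using hg _ (hh v hv)
  | inv g _ hg =>
    intro v hv
    rw [map_inv, coe_inv_fin_two, sub_mulVec, smul_mulVec, one_mulVec]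
    exact W.sub_mem (W.smul_mem _ hv) (hg v hv)

namespace IrreducibleSL2

variable {G : Type} [Group G] {ρ : G →* SL(2, ℂ)}

theorem eq_smul_one_of_commute (hirr : IrreducibleSL2 ρ) {M : Matrix (Fin 2) (Fin 2) ℂ}
    (hM : ∀ g, Commute M (ρ g : Matrix (Fin 2) (Fin 2) ℂ)) : ∃ c : ℂ, M = c • 1 := by
  obtain ⟨μ, v, hv, hMv⟩ := M.exists_mulVec_eq_smul
  let E := Module.End.eigenspace (toLin' M) μ
  have hmem (w : Fin 2 → ℂ) : w ∈ E ↔ M *ᵥ w = μ • w := by simp [E]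
  have hE : E = ⊤ := by
    by_contra hE
    refine hirr ⟨E, ?_, fun g w hw => ?_⟩
    · have h1 : Module.finrank ℂ E ≠ 0 := fun h0 =>
        hv ((Submodule.mem_bot ℂ).mp (Submodule.finrank_eq_zero.mp h0 ▸ (hmem v).mpr hMv))
      have h2 : Module.finrank ℂ E < 2 := by
        simpa using Submodule.finrank_lt hE
      omega
    · rw [hmem] at hw ⊢
      rw [mulVec_mulVec, (hM g).eq, ← mulVec_mulVec, hw, mulVec_smul]
  refine ⟨μ, toLin'.injective (LinearMap.ext fun w => ?_)⟩
  simpa [smul_mulVec] using (hmem w).mp (hE ▸ Submodule.mem_top)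

theorem ne_smul_one_of_closure_pair (hirr : IrreducibleSL2 ρ) {x y : G}
    (hxy : Subgroup.closure {x, y} = ⊤) (c : ℂ) : (ρ x : Matrix (Fin 2) (Fin 2) ℂ) ≠ c • 1 := by
  intro hx
  obtain ⟨μ, v, hv, hyv⟩ := (ρ y : Matrix (Fin 2) (Fin 2) ℂ).exists_mulVec_eq_smul
  refine hirr ⟨ℂ ∙ v, finrank_span_singleton hv,
    Matrix.SpecialLinearGroup.mulVec_mem_of_closure_eq_top ρ hxy ?_⟩
  rintro s (rfl | rfl) w hw <;> obtain ⟨d, rfl⟩ := Submodule.mem_span_singleton.mp hw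
  · rw [hx, smul_mulVec, one_mulVec]
    exact Submodule.smul_mem _ _ hw
  · rw [mulVec_smul, hyv]
    exact Submodule.smul_mem _ _ (Submodule.smul_mem _ _ (Submodule.mem_span_singleton_self _))

end IrreducibleSL2

namespace TorusGroup

variable {p q : ℤ}

theorem of_true_zpow_eq :
    (PresentedGroup.of true : TorusGroup p q) ^ p = PresentedGroup.of false ^ q :=
  PresentedGroup.mk_eq_mk_of_mul_inv_mem (rels := torusRels p q)
    (x := FreeGroup.of true ^ p) (y := FreeGroup.of false ^ q) rfl

theorem closure_of_pair :
    Subgroup.closure {(PresentedGroup.of true : TorusGroup p q), PresentedGroup.of false} = ⊤ := by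
  rw [← PresentedGroup.closure_range_of, Bool.range_eq, Set.pair_comm]

theorem commute_of_true_zpow (g : TorusGroup p q) : Commute (PresentedGroup.of true ^ p) g := by
  have hg : g ∈ Subgroup.closure {PresentedGroup.of true, PresentedGroup.of false} :=
    closure_of_pair ▸ Subgroup.mem_top g
  induction hg using Subgroup.closure_induction with
  | mem s hs =>
    rcases hs with rfl | rfl
    · exact (Commute.refl _).zpow_left p
    · rw [of_true_zpow_eq]
      exact (Commute.refl _).zpow_left q
  | one => exact Commute.one_right _
  | mul _ _ _ _ hg hh => exact hg.mul_right hh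
  | inv _ _ hg => exact hg.inv_right

end TorusGroup

theorem Nat.modEq_two_of_neg_one_pow_eq {R : Type*} [Ring R] (hR : (-1 : R) ≠ 1) {a b : ℕ}
    (h : (-1 : R) ^ a = (-1) ^ b) : a ≡ b [MOD 2] := by
  have hab : Even a ↔ Even b := by
    rw [← neg_one_pow_eq_one_iff_even hR, h, neg_one_pow_eq_one_iff_even hR]
  rw [Nat.even_iff, Nat.even_iff] at hab
  unfold Nat.ModEq
  omega

open Real in
theorem Complex.exists_two_cos_of_pow_eq_one {ζ : ℂ} {n : ℕ} (hn : n ≠ 0)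
    (h : ζ ^ (2 * n) = 1) (hζ : ζ ^ 2 ≠ 1) :
    ∃ α : ℕ, 0 < α ∧ α < n ∧ ζ ^ n = (-1) ^ α ∧ ζ + ζ⁻¹ = 2 * Complex.cos (α * π / n) := by
  let w : ℕ → ℂ := fun j => exp (j * π / n * I)
  have hw_pow (j : ℕ) : w j ^ n = (-1) ^ j := by
    rw [← exp_nat_mul, ← exp_pi_mul_I, ← exp_nat_mul]
    congr 1
    field_simp
  have hw_cos (j : ℕ) : w j + (w j)⁻¹ = 2 * Complex.cos (j * π / n) := by
    rw [two_cos, ← exp_neg, neg_mul]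
  have hw_mul {j k : ℕ} (hjk : j + k = 2 * n) : w j * w k = 1 := by
    rw [← exp_add, ← exp_two_pi_mul_I]
    congr 1
    rw [← add_mul, ← add_div, ← add_mul, ← Nat.cast_add, hjk]
    field_simp
    push_cast
    ring
  have : NeZero (2 * n) := ⟨by omega⟩
  obtain ⟨k, hk, rfl⟩ := (isPrimitiveRoot_exp (2 * n) (by omega)).eq_pow_of_pow_eq_one h
  have hζk : exp (2 * π * I / ↑(2 * n)) ^ k = w k := by
    rw [← exp_nat_mul]
    congr 1
    push_cast
    field_simp
  rw [hζk] at hζ ⊢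
  have hk0 : k ≠ 0 := by
    rintro rfl
    simp [w] at hζ
  have hkn : k ≠ n := by
    rintro rfl
    refine hζ ?_
    simp only [w]
    rw [mul_div_cancel_left₀ _ (Nat.cast_ne_zero.mpr hn), exp_pi_mul_I, neg_one_sq]
  rcases lt_or_gt_of_ne hkn with hlt | hgt
  · exact ⟨k, by omega, hlt, hw_pow k, hw_cos k⟩
  · -- for `n < k < 2n` the conjugate root `ζ⁻¹ = w (2n - k)` does the job
    have hinv : w k = (w (2 * n - k))⁻¹ := eq_inv_of_mul_eq_one_left (hw_mul (by omega))
    refine ⟨2 * n - k, by omega, by omega, ?_, ?_⟩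
    · rw [hinv, inv_pow, hw_pow, ← inv_pow, inv_neg_one]
    · rw [hinv, inv_inv, add_comm, hw_cos]

open Real in
theorem Matrix.exists_trace_eq_two_cos_of_pow_eq_smul_one {A : Matrix (Fin 2) (Fin 2) ℂ}
    (hdet : A.det = 1) (hA : ∀ c : ℂ, A ≠ c • 1) {n : ℕ} (hn : n ≠ 0) {ε : ℂ}
    (hpow : A ^ n = ε • 1) :
    ∃ α : ℕ, 0 < α ∧ α < n ∧ (-1) ^ α = ε ∧ A.trace = 2 * Complex.cos (α * π / n) := by
  obtain ⟨μ, v, hv, hAv⟩ := A.exists_mulVec_eq_smul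
  have hpow_mulVec (k : ℕ) : (A ^ k) *ᵥ v = μ ^ k • v := by
    induction k with
    | zero => simp
    | succ k ih =>
      rw [pow_succ, ← mulVec_mulVec, hAv, mulVec_smul, ih, smul_smul, ← pow_succ']
  have hμn : μ ^ n = ε := smul_left_injective ℂ hv <| by
    simpa [hpow, smul_mulVec] using (hpow_mulVec n).symm
  have hε : ε ^ 2 = 1 := by
    have h := congrArg det hpow
    rwa [det_pow, hdet, one_pow, det_smul, det_one, mul_one, Fintype.card_fin, eq_comm] at h
  have hquad : μ ^ 2 - A.trace * μ + 1 = 0 := smul_left_injective ℂ hv <| by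
    simpa [hdet, sub_mulVec, add_mulVec, smul_mulVec, hpow_mulVec, hAv, sub_smul, add_smul,
      smul_smul] using congrArg (· *ᵥ v) A.sq_sub_trace_smul_add_det_smul
  have hμ0 : μ ≠ 0 := by
    rintro rfl
    simp at hquad
  have htr : A.trace = μ + μ⁻¹ := by
    field_simp
    linear_combination -hquad
  have hμsq : μ ^ 2 ≠ 1 := by
    intro hμsq
    have htr2 : A.trace = 2 * μ := by
      rw [htr, inv_eq_of_mul_eq_one_right (sq μ ▸ hμsq)]
      ring
    have hε0 : ε ≠ 0 := by
      rintro rfl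
      simp at hε
    refine hA μ (eq_smul_one_of_isNilpotent_sub_of_pow_eq hn hε0 hpow ⟨2, ?_⟩)
    calc (A - μ • 1) ^ 2
        = A ^ 2 - (2 * μ) • A + μ ^ 2 • (1 : Matrix (Fin 2) (Fin 2) ℂ) := by
          simp only [sq, sub_mul, mul_sub, Matrix.smul_mul, Matrix.mul_smul, one_mul, mul_one]
          module
      _ = 0 := by rw [← htr2, hμsq, ← hdet]; exact A.sq_sub_trace_smul_add_det_smul
  obtain ⟨α, hα0, hαn, hμα, hcos⟩ :=
    exists_two_cos_of_pow_eq_one hn (by rw [pow_mul', hμn, hε]) hμsq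
  exact ⟨α, hα0, hαn, hμα ▸ hμn, htr.trans hcos⟩

open Real in
theorem trace_of_irreducible_rep_general (p q : ℤ) (hp : 2 ≤ p) (hq : 2 ≤ q)
    (ρ : TorusGroup p q →* Matrix.SpecialLinearGroup (Fin 2) ℂ)
    (hirr : IrreducibleSL2 ρ) :
    ∃ α β : ℤ, 1 ≤ α ∧ α ≤ p - 1 ∧ 1 ≤ β ∧ β ≤ q - 1 ∧ Int.ModEq 2 α β ∧
      Matrix.trace ((ρ (PresentedGroup.of true) : Matrix.SpecialLinearGroup (Fin 2) ℂ) :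
          Matrix (Fin 2) (Fin 2) ℂ)
        = 2 * Complex.cos ((α : ℂ) * (π : ℂ) / (p : ℂ)) ∧
      Matrix.trace ((ρ (PresentedGroup.of false) : Matrix.SpecialLinearGroup (Fin 2) ℂ) :
          Matrix (Fin 2) (Fin 2) ℂ)
        = 2 * Complex.cos ((β : ℂ) * (π : ℂ) / (q : ℂ)) := by
  obtain ⟨n, rfl⟩ := Int.eq_ofNat_of_zero_le (by omega : 0 ≤ p)
  obtain ⟨m, rfl⟩ := Int.eq_ofNat_of_zero_le (by omega : 0 ≤ q)
  let toMatrix : SL(2, ℂ) →* Matrix (Fin 2) (Fin 2) ℂ := Matrix.SpecialLinearGroup.coeMonoidHom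
  obtain ⟨ε, hA⟩ : ∃ ε : ℂ, toMatrix (ρ (PresentedGroup.of true)) ^ n = ε • 1 :=
    hirr.eq_smul_one_of_commute fun g => by
      simpa [toMatrix] using ((TorusGroup.commute_of_true_zpow g).map ρ).map toMatrix
  have hB : toMatrix (ρ (PresentedGroup.of false)) ^ m = ε • 1 := by
    rw [← hA, ← map_pow, ← map_pow, ← map_pow, ← map_pow, ← zpow_natCast, ← zpow_natCast,
      TorusGroup.of_true_zpow_eq]
  obtain ⟨α, hα0, hαn, hαε, hαtr⟩ := exists_trace_eq_two_cos_of_pow_eq_smul_one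
    (ρ _).prop (hirr.ne_smul_one_of_closure_pair TorusGroup.closure_of_pair) (by omega) hA
  obtain ⟨β, hβ0, hβm, hβε, hβtr⟩ := exists_trace_eq_two_cos_of_pow_eq_smul_one
    (ρ _).prop
    (hirr.ne_smul_one_of_closure_pair (Set.pair_comm _ _ ▸ TorusGroup.closure_of_pair))
    (by omega) hB
  have hαβ : α ≡ β [MOD 2] :=
    Nat.modEq_two_of_neg_one_pow_eq (by norm_num) (hαε.trans hβε.symm)
  refine ⟨α, β, by omega, by omega, by omega, by omega, Int.natCast_modEq_iff.mpr hαβ, ?_, ?_⟩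
  · simpa using hαtr
  · simpa using hβtr

open Real in
/-- For an irreducible `SL(2,ℂ)`-representation `ρ` of `⟨a, b | a^p = b^q⟩` there is
an admissible pair `(α, β)` with `tr ρ(a) = 2 cos(απ/p)` and `tr ρ(b) = 2 cos(βπ/q)`. -/
theorem trace_of_irreducible_rep (p q : ℤ) (hp : 2 ≤ p) (hq : 2 ≤ q)
    (hpq : IsCoprime p q)
    (ρ : TorusGroup p q →* Matrix.SpecialLinearGroup (Fin 2) ℂ)
    (hirr : IrreducibleSL2 ρ) :
    ∃ α β : ℤ, 1 ≤ α ∧ α ≤ p - 1 ∧ 1 ≤ β ∧ β ≤ q - 1 ∧ Int.ModEq 2 α β ∧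
      Matrix.trace ((ρ (PresentedGroup.of true) : Matrix.SpecialLinearGroup (Fin 2) ℂ) :
          Matrix (Fin 2) (Fin 2) ℂ)
        = 2 * Complex.cos ((α : ℂ) * (π : ℂ) / (p : ℂ)) ∧
      Matrix.trace ((ρ (PresentedGroup.of false) : Matrix.SpecialLinearGroup (Fin 2) ℂ) :
          Matrix (Fin 2) (Fin 2) ℂ)
        = 2 * Complex.cos ((β : ℂ) * (π : ℂ) / (q : ℂ)) :=
  trace_of_irreducible_rep_general p q hp hq ρ hirr
end

section
/- Let p, q ≥ 2 be coprime integers, r, s integers with ps − qr = 1, (α, β) an admissible pair, and (k⁻, k⁺) bifurcation parameters associated to (α, β). Then sin²(πk⁺/p) = sin²(απ/p) and sin²(πk⁺/q) = sin²(βπ/q); in particular (4/(pq))²·sin²(πk⁺/p)·sin²(πk⁺/q) = (16/(p²q²))·sin²(απ/p)·sin²(βπ/q). -/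
section

open Real

lemma sin_sq_add_int_mul_pi (x : ℝ) (n : ℤ) : sin (x + n * π) ^ 2 = sin x ^ 2 := by
  rw [sin_add_int_mul_pi, mul_pow, ← sq_abs ((-1 : ℝ) ^ n), abs_neg_one_zpow, one_pow, one_mul]

lemma sin_sq_pi_mul_div_of_modEq {n k a : ℤ} (h : k ≡ a [ZMOD n]) :
    sin (π * k / n) ^ 2 = sin (π * a / n) ^ 2 := by
  rcases eq_or_ne n 0 with rfl | hn
  · rw [Int.modEq_zero_iff.mp h]
  obtain ⟨t, ht⟩ := Int.modEq_iff_dvd.mp h.symm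
  have hk : (k : ℝ) = a + n * t := by exact_mod_cast (by linarith : k = a + n * t)
  have hx : π * k / n = π * a / n + t * π := by
    rw [hk]
    field_simp
  rw [hx, sin_sq_add_int_mul_pi]

lemma sin_sq_pi_mul_div_of_modEq_unit_mul {n k a ε : ℤ} (hε : IsUnit ε)
    (h : k ≡ ε * a [ZMOD n]) : sin (π * k / n) ^ 2 = sin (π * a / n) ^ 2 := by
  rw [sin_sq_pi_mul_div_of_modEq h]
  rcases Int.isUnit_iff.mp hε with rfl | rfl
  · rw [one_mul]
  · rw [neg_one_mul, Int.cast_neg, mul_neg, neg_div, sin_neg, neg_sq]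

section Idempotents

variable {p q r s : ℤ} (hrs : p * s - q * r = 1)
include hrs

lemma mul_add_mul_modEq_neg_left (b c : ℤ) : b * p * s + c * q * r ≡ -c [ZMOD p] :=
  Int.modEq_iff_dvd.mpr ⟨-(b * s + c * s), by linear_combination c * hrs⟩

lemma mul_add_mul_modEq_right (b c : ℤ) : b * p * s + c * q * r ≡ b [ZMOD q] :=
  Int.modEq_iff_dvd.mpr ⟨-(b * r + c * r), by linear_combination -b * hrs⟩

end Idempotents

end

open Real in
theorem residue_squared_eq_torsion_general (p q r s : ℤ)
    (hrs : p * s - q * r = 1) (α β km kp : ℤ)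
    (hbif : BifParams p q r s α β km kp) :
    Real.sin (π * kp / p) ^ 2 = Real.sin (α * π / p) ^ 2 ∧
    Real.sin (π * kp / q) ^ 2 = Real.sin (β * π / q) ^ 2 ∧
    (4 / ((p : ℝ) * q)) ^ 2 * (Real.sin (π * kp / p) ^ 2 * Real.sin (π * kp / q) ^ 2)
      = 16 / ((p : ℝ) ^ 2 * (q : ℝ) ^ 2) *
          (Real.sin (α * π / p) ^ 2 * Real.sin (β * π / q) ^ 2) := by
  obtain ⟨-, -, -, e, -, ep, he, -, hep, -, hkp⟩ := hbif
  rw [← Int.isUnit_iff] at he hep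
  have hmodp : kp ≡ -(ep * e) * α [ZMOD p] := by
    have := (hkp.of_dvd (dvd_mul_right p q)).trans
      ((mul_add_mul_modEq_neg_left hrs β (e * α)).mul_left ep)
    rwa [mul_neg, ← mul_assoc, ← neg_mul] at this
  have hmodq : kp ≡ ep * β [ZMOD q] :=
    (hkp.of_dvd (dvd_mul_left q p)).trans ((mul_add_mul_modEq_right hrs β (e * α)).mul_left ep)
  have hsinp := sin_sq_pi_mul_div_of_modEq_unit_mul (hep.mul he).neg hmodp
  have hsinq := sin_sq_pi_mul_div_of_modEq_unit_mul hep hmodq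
  rw [mul_comm π (α : ℝ)] at hsinp
  rw [mul_comm π (β : ℝ)] at hsinq
  refine ⟨hsinp, hsinq, ?_⟩
  rw [hsinp, hsinq]
  ring

open Real in
/-- `sin²(πk⁺/p) = sin²(απ/p)` and `sin²(πk⁺/q) = sin²(βπ/q)`; in particular the
squared residue of the abelian torsion equals the non-abelian torsion value
`(16/(p²q²)) sin²(απ/p) sin²(βπ/q)`. -/
theorem residue_squared_eq_torsion (p q r s : ℤ) (hp : 2 ≤ p) (hq : 2 ≤ q)
    (hpq : IsCoprime p q) (hrs : p * s - q * r = 1) (α β km kp : ℤ)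
    (hadm : Admissible p q α β) (hbif : BifParams p q r s α β km kp) :
    Real.sin (π * kp / p) ^ 2 = Real.sin (α * π / p) ^ 2 ∧
    Real.sin (π * kp / q) ^ 2 = Real.sin (β * π / q) ^ 2 ∧
    (4 / ((p : ℝ) * q)) ^ 2 * (Real.sin (π * kp / p) ^ 2 * Real.sin (π * kp / q) ^ 2)
      = 16 / ((p : ℝ) ^ 2 * (q : ℝ) ^ 2) *
          (Real.sin (α * π / p) ^ 2 * Real.sin (β * π / q) ^ 2) :=
  residue_squared_eq_torsion_general p q r s hrs α β km kp hbif
end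

section
/- Let p, q ≥ 2 be coprime integers and let Π be the group with presentation ⟨a, b | aᵖ = b^q⟩. Let ρ : Π → SL(2, ℂ) be a representation whose induced action on ℂ² is irreducible, and let 𝔰𝔩₂(ℂ)_ρ denote the 3-dimensional complex vector space of trace-zero 2×2 complex matrices equipped with the Π-action g·X = ρ(g)·X·ρ(g)⁻¹. Then the first group cohomology H¹(Π, 𝔰𝔩₂(ℂ)_ρ) is a one-dimensional complex vector space. -/
/-- `𝔰𝔩₂(ℂ)`: the (3-dimensional) complex vector space of trace-zero `2 × 2`
complex matrices. -/
noncomputable def sl2C : Submodule ℂ (Matrix (Fin 2) (Fin 2) ℂ) :=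
  LinearMap.ker (Matrix.traceLinearMap (Fin 2) ℂ ℂ)

/-- Conjugation `X ↦ ρ(g) X ρ(g)⁻¹` as a linear endomorphism of the matrix space. -/
noncomputable def conjMap {G : Type} [Group G] (ρ : G →* Matrix.SpecialLinearGroup (Fin 2) ℂ)
    (g : G) : Matrix (Fin 2) (Fin 2) ℂ →ₗ[ℂ] Matrix (Fin 2) (Fin 2) ℂ :=
  (LinearMap.mulRight ℂ ((ρ g⁻¹ : Matrix.SpecialLinearGroup (Fin 2) ℂ) :
      Matrix (Fin 2) (Fin 2) ℂ)).comp
    (LinearMap.mulLeft ℂ ((ρ g : Matrix.SpecialLinearGroup (Fin 2) ℂ) :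
      Matrix (Fin 2) (Fin 2) ℂ))

lemma conjMap_mem {G : Type} [Group G] (ρ : G →* Matrix.SpecialLinearGroup (Fin 2) ℂ)
    (g : G) : ∀ X ∈ sl2C, conjMap ρ g X ∈ sl2C := by
  intro X hX
  have hX' : Matrix.trace X = 0 := hX
  show Matrix.trace
      (((ρ g : Matrix.SpecialLinearGroup (Fin 2) ℂ) : Matrix (Fin 2) (Fin 2) ℂ) * X *
        ((ρ g⁻¹ : Matrix.SpecialLinearGroup (Fin 2) ℂ) : Matrix (Fin 2) (Fin 2) ℂ)) = 0
  rw [Matrix.trace_mul_cycle, ← Matrix.SpecialLinearGroup.coe_mul, ← map_mul,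
    inv_mul_cancel, map_one, Matrix.SpecialLinearGroup.coe_one, one_mul, hX']

/-- The adjoint representation `Ad ∘ ρ` of `G` on `𝔰𝔩₂(ℂ)`,
`g • X = ρ(g) X ρ(g)⁻¹`. -/
noncomputable def adRep {G : Type} [Group G] (ρ : G →* Matrix.SpecialLinearGroup (Fin 2) ℂ) :
    Representation ℂ G sl2C where
  toFun g := (conjMap ρ g).restrict (conjMap_mem ρ g)
  map_one' := by
    ext X
    simp [conjMap, LinearMap.restrict_apply]
  map_mul' g h := by
    ext X
    simp [conjMap, LinearMap.restrict_apply, map_mul, mul_inv_rev, mul_assoc]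

/-!
Evaluating a cocycle at the generators identifies `Z¹(Π, 𝔰𝔩₂)` with the kernel of the Fox
Jacobian `(x, y) ↦ (1 + a + ⋯ + a^{p-1}) x - (1 + b + ⋯ + b^{q-1}) y` on `𝔰𝔩₂ × 𝔰𝔩₂`; a pair in
this kernel extends to a cocycle through a homomorphism `Π → 𝔰𝔩₂ ⋊ Π`. Since `a^p = b^q` is
central, irreducibility (Schur) makes `ρ(a^p)` scalar, so `Ad ρ(a)` has order dividing `p` and the
geometric sum in `a` has image the fixed line of `Ad ρ(a)`, i.e. the centralizer in `𝔰𝔩₂` of the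
non-scalar matrix `ρ(a)`; likewise for `b`. The two lines meet trivially, so the Jacobian has
rank 2 and `dim Z¹ = 6 - 2 = 4`. There are no invariants, so `dim B¹ = dim 𝔰𝔩₂ = 3`, and
`dim H¹ = 1`.
-/

universe u

open Module

namespace groupCohomology

variable {k G : Type u} [CommRing k] [Group G] {A : Rep k G}

lemma cocycles₁_map_pow (f : cocycles₁ A) (g : G) (n : ℕ) :
    f (g ^ n) = (∑ i ∈ Finset.range n, A.ρ g ^ i) (f g) := by
  induction n with
  | zero => simp
  | succ n ih =>
    rw [pow_succ', (mem_cocycles₁_iff f).1 f.2, ih, Finset.sum_range_succ']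
    simp [LinearMap.sum_apply, pow_succ']

lemma cocycles₁_eq_zero_of_closure_eq_top {s : Set G} (hs : Subgroup.closure s = ⊤)
    (f : cocycles₁ A) (hf : ∀ g ∈ s, f g = 0) : f = 0 := by
  let zeroSet : Subgroup G :=
    { carrier := {g | f g = 0}
      one_mem' := cocycles₁_map_one f
      mul_mem' := fun {g h} hg hh => by simp_all [(mem_cocycles₁_iff f).1 f.2 g h]
      inv_mem' := fun {g} hg => by
        have h := congrArg (A.ρ g⁻¹) (cocycles₁_map_inv f g)
        rwa [Representation.inv_self_apply, hg, neg_zero, map_zero] at h }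
  have hle : s ≤ zeroSet := hf
  ext g
  exact (hs ▸ (Subgroup.closure_le zeroSet).2 hle) (Subgroup.mem_top g)

section Field

variable {k G : Type u} [Field k] [Group G] (A : Rep k G)

lemma finrank_H1_add_finrank_coboundaries₁ [FiniteDimensional k (cocycles₁ A)] :
    finrank k (H1 A) + finrank k (coboundaries₁ A) = finrank k (cocycles₁ A) := by
  have hsurj : Function.Surjective (H1π A).hom :=
    (ModuleCat.epi_iff_surjective _).1 inferInstance
  have hker : LinearMap.ker (H1π A).hom = (coboundaries₁ A).comap (cocycles₁ A).subtype := by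
    ext f
    exact H1π_eq_zero_iff f
  rw [← LinearMap.finrank_range_add_finrank_ker (H1π A).hom, LinearMap.range_eq_top.2 hsurj,
    finrank_top, hker, (Submodule.comapSubtypeEquivOfLe (coboundaries₁_le_cocycles₁ A)).finrank_eq]

lemma finrank_coboundaries₁_of_invariants_eq_bot (h : A.ρ.invariants = ⊥) :
    finrank k (coboundaries₁ A) = finrank k A :=
  LinearMap.finrank_range_of_inj (LinearMap.ker_eq_bot.1 (d₀₁_ker_eq_invariants A ▸ h))

end Field

end groupCohomology

namespace Rep

variable {k G : Type u} [CommRing k] [Group G] (A : Rep k G)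

def toMulAutMultiplicative : G →* MulAut (Multiplicative A) where
  toFun g := AddEquiv.toMultiplicative
    (LinearMap.GeneralLinearGroup.toLinearEquiv (A.ρ.asGroupHom g)).toAddEquiv
  map_one' := by ext x; simp
  map_mul' g h := by ext x; simp

@[simp]
lemma toMulAutMultiplicative_apply (g : G) (x : Multiplicative A) :
    A.toMulAutMultiplicative g x = .ofAdd (A.ρ g x.toAdd) := rfl

lemma mk_ofAdd_pow (x : A) (g : G) (n : ℕ) :
    (⟨.ofAdd x, g⟩ : Multiplicative A ⋊[A.toMulAutMultiplicative] G) ^ n =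
      ⟨.ofAdd ((∑ i ∈ Finset.range n, A.ρ g ^ i) x), g ^ n⟩ := by
  induction n with
  | zero =>
    simp only [pow_zero, Finset.range_zero, Finset.sum_empty, LinearMap.zero_apply, ofAdd_zero]
    rfl
  | succ n ih =>
    rw [pow_succ, ih, SemidirectProduct.mul_def, toMulAutMultiplicative_apply, toAdd_ofAdd,
      ← ofAdd_add, ← pow_succ, Finset.sum_range_succ, LinearMap.add_apply, map_pow]

lemma toAdd_left_mem_cocycles₁ (σ : G →* Multiplicative A ⋊[A.toMulAutMultiplicative] G)
    (hσ : ∀ g, (σ g).right = g) : (fun g => (σ g).left.toAdd) ∈ groupCohomology.cocycles₁ A := by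
  refine (groupCohomology.mem_cocycles₁_iff _).2 fun g h => ?_
  rw [map_mul, SemidirectProduct.mul_left, hσ, toMulAutMultiplicative_apply, toAdd_mul,
    toAdd_ofAdd, add_comm]

end Rep

namespace Module.End

variable {K V : Type*} [Field K] [CharZero K] [AddCommGroup V] [Module K V]

lemma range_geom_sum_eq_ker_sub_one (f : Module.End K V) {n : ℕ} (hn : n ≠ 0) (hf : f ^ n = 1) :
    LinearMap.range (∑ i ∈ Finset.range n, f ^ i) = LinearMap.ker (f - 1) := by
  refine le_antisymm ?_ fun x hx => ?_
  · rw [LinearMap.range_le_ker_iff, ← Module.End.mul_eq_comp, mul_geom_sum, hf, sub_self]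
  · have hfix : ∀ i : ℕ, (f ^ i) x = x := fun i => by
      rw [LinearMap.mem_ker, LinearMap.sub_apply, one_apply, sub_eq_zero] at hx
      rw [pow_apply, Function.iterate_fixed hx]
    refine ⟨(n : K)⁻¹ • x, ?_⟩
    simp [LinearMap.sum_apply, hfix, ← Nat.cast_smul_eq_nsmul K, smul_smul, hn]

end Module.End

namespace TorusGroup

open groupCohomology

def a (p q : ℤ) : TorusGroup p q := PresentedGroup.of true

def b (p q : ℤ) : TorusGroup p q := PresentedGroup.of false

lemma a_zpow_eq_b_zpow (p q : ℤ) : a p q ^ p = b p q ^ q := by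
  have h := PresentedGroup.mk_eq_mk_of_mul_inv_mem (rels := torusRels p q) (Set.mem_singleton _)
  rw [map_zpow, map_zpow] at h
  exact h

lemma a_pow_eq_b_pow (m n : ℕ) : a m n ^ m = b m n ^ n := by
  exact_mod_cast a_zpow_eq_b_zpow m n

section

variable {k : Type} [CommRing k] {m n : ℕ} (A : Rep k (TorusGroup m n))

/-- The Fox Jacobian of the relator `a^m b^{-n}`, twisted by `A`. -/
def foxMap : A × A →ₗ[k] A :=
  (∑ i ∈ Finset.range m, A.ρ (a m n) ^ i).coprod (-∑ i ∈ Finset.range n, A.ρ (b m n) ^ i)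

def evalGenerators : cocycles₁ A →ₗ[k] A × A where
  toFun f := (f (a m n), f (b m n))
  map_add' _ _ := rfl
  map_smul' _ _ := rfl

lemma evalGenerators_injective : Function.Injective (evalGenerators A) := by
  refine (injective_iff_map_eq_zero _).2 fun f hf => ?_
  refine cocycles₁_eq_zero_of_closure_eq_top (PresentedGroup.closure_range_of _) f ?_
  simp only [Set.forall_mem_range, Bool.forall_bool]
  exact ⟨congrArg Prod.snd hf, congrArg Prod.fst hf⟩

lemma range_evalGenerators : LinearMap.range (evalGenerators A) = LinearMap.ker (foxMap A) := by
  refine le_antisymm ?_ fun ⟨x, y⟩ hxy => ?_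
  · rintro _ ⟨f, rfl⟩
    simp [foxMap, evalGenerators, ← cocycles₁_map_pow, a_pow_eq_b_pow]
  · let gen : Bool → Multiplicative A ⋊[A.toMulAutMultiplicative] TorusGroup m n :=
      fun t => if t then ⟨.ofAdd x, a m n⟩ else ⟨.ofAdd y, b m n⟩
    rw [LinearMap.mem_ker, foxMap, LinearMap.coprod_apply, LinearMap.neg_apply,
      ← sub_eq_add_neg, sub_eq_zero] at hxy
    have hrel : ∀ r ∈ torusRels m n, FreeGroup.lift gen r = 1 := by
      rintro _ rfl
      rw [map_mul, map_inv, map_zpow, map_zpow, FreeGroup.lift_apply_of, FreeGroup.lift_apply_of,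
        mul_inv_eq_one, zpow_natCast, zpow_natCast]
      simp only [gen, if_true, Bool.false_eq_true, if_false]
      rw [Rep.mk_ofAdd_pow, Rep.mk_ofAdd_pow, hxy, a_pow_eq_b_pow]
    let σ := PresentedGroup.toGroup hrel
    have hσ : SemidirectProduct.rightHom.comp σ = MonoidHom.id _ :=
      PresentedGroup.ext fun t => by cases t <;> rfl
    refine ⟨⟨_, A.toAdd_left_mem_cocycles₁ σ (DFunLike.congr_fun hσ)⟩, ?_⟩
    simp [evalGenerators, σ, a, b, gen]

end

lemma finrank_cocycles₁_eq_finrank_ker_foxMap {k : Type} [Field k] {m n : ℕ}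
    (A : Rep k (TorusGroup m n)) :
    finrank k (cocycles₁ A) = finrank k (LinearMap.ker (foxMap A)) := by
  rw [← range_evalGenerators, LinearMap.finrank_range_of_inj (evalGenerators_injective A)]

end TorusGroup

local notation "M2" => Matrix (Fin 2) (Fin 2) ℂ
local notation "SL2" => Matrix.SpecialLinearGroup (Fin 2) ℂ

namespace Matrix

/-- The commutation equations say exactly that the cross product of `(M₀₁, M₁₀, M₀₀ - M₁₁)` and
`(X₀₁, X₁₀, 2 X₀₀)` vanishes. -/
lemma exists_eq_smul_sub_trace_of_commute {K : Type*} [Field K] [CharZero K]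
    {M X : Matrix (Fin 2) (Fin 2) K} (hM : ¬∃ c : K, M = c • 1) (hX : X.trace = 0)
    (h : Commute M X) : ∃ t : K, X = t • (M - (M.trace / 2) • 1) := by
  set u : Fin 3 → K := ![M 0 1, M 1 0, M 0 0 - M 1 1]
  set v : Fin 3 → K := ![X 0 1, X 1 0, 2 * X 0 0]
  rw [trace_fin_two] at hX
  have hu : u ≠ 0 := by
    intro hu0
    have h01 : M 0 1 = 0 := congrFun hu0 0
    have h10 : M 1 0 = 0 := congrFun hu0 1
    have hd : M 0 0 - M 1 1 = 0 := congrFun hu0 2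
    refine hM ⟨M 0 0, ?_⟩
    ext i j
    fin_cases i <;> fin_cases j <;>
      simp only [Fin.zero_eta, Fin.isValue, Fin.mk_one, h01, h10, smul_apply, one_apply_eq,
        one_apply_ne, ne_eq, zero_ne_one, one_ne_zero, not_false_eq_true, smul_eq_mul, mul_one,
        mul_zero]
    linear_combination -hd
  have huv : crossProduct u v = 0 := by
    have e := fun i j => congrFun (congrFun h.eq i) j
    simp only [mul_apply, Fin.sum_univ_two] at e
    ext i
    fin_cases i <;>
      simp only [Fin.isValue, Fin.zero_eta, Fin.mk_one, Fin.reduceFinMk, cross_apply,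
        Nat.succ_eq_add_one, Nat.reduceAdd, cons_val_one, cons_val_zero, cons_val, Pi.zero_apply,
        u, v]
    · linear_combination e 1 0 + M 1 0 * hX
    · linear_combination e 0 1 - M 0 1 * hX
    · linear_combination e 0 0
  have hdep : ¬LinearIndependent K ![v, u] := by
    rw [← crossProduct_ne_zero_iff_linearIndependent, not_not, ← cross_anticomm, huv, neg_zero]
  obtain ⟨t, ht⟩ : ∃ t : K, t • u = v := by
    simpa [linearIndependent_fin2, hu] using hdep
  have ht01 : t * M 0 1 = X 0 1 := congrFun ht 0
  have ht10 : t * M 1 0 = X 1 0 := congrFun ht 1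
  have htd : t * (M 0 0 - M 1 1) = 2 * X 0 0 := congrFun ht 2
  refine ⟨t, ?_⟩
  ext i j
  fin_cases i <;> fin_cases j <;>
    simp only [Fin.zero_eta, Fin.isValue, Fin.mk_one, trace_fin_two, smul_apply, sub_apply,
      Nat.reduceAdd, ne_eq, zero_ne_one, one_ne_zero, not_false_eq_true, one_apply_eq,
      one_apply_ne, smul_eq_mul, mul_one, mul_zero, sub_zero]
  · linear_combination -htd / 2
  · linear_combination -ht01
  · linear_combination -ht10
  · linear_combination htd / 2 + hX

lemma not_exists_eq_smul_one_of_forall_commute {R : Type*} [CommRing R] [Nontrivial R]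
    {A B : Matrix (Fin 2) (Fin 2) R}
    (h : ∀ N, Commute N A → Commute N B → ∃ c : R, N = c • 1) : ¬∃ c : R, A = c • 1 := by
  rintro ⟨c, rfl⟩
  obtain ⟨d, rfl⟩ := h B ((Commute.one_right B).smul_right c) (Commute.refl B)
  obtain ⟨e, he⟩ := h (Matrix.single 0 1 1) ((Commute.one_right _).smul_right c)
    ((Commute.one_right _).smul_right d)
  simpa using congrFun (congrFun he 0) 1

end Matrix

lemma finrank_sl2C : finrank ℂ sl2C = 3 := by
  have hsurj : Function.Surjective (Matrix.traceLinearMap (Fin 2) ℂ ℂ) := fun c =>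
    ⟨Matrix.diagonal ![c, 0], by simp⟩
  have h := LinearMap.finrank_range_add_finrank_ker (Matrix.traceLinearMap (Fin 2) ℂ ℂ)
  rw [LinearMap.range_eq_top.2 hsurj, finrank_top, finrank_self, Module.finrank_matrix] at h
  simp only [Fintype.card_fin, finrank_self] at h
  exact Nat.add_left_cancel (h.trans rfl : 1 + finrank ℂ sl2C = 1 + 3)

section adRep

variable {G : Type} [Group G] (ρ : G →* SL2)

lemma adRep_apply_eq_self_iff (g : G) (X : sl2C) :
    adRep ρ g X = X ↔ Commute (ρ g : M2) X := by
  rw [← Subtype.coe_inj]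
  change (ρ g : M2) * X * (Matrix.SpecialLinearGroup.toGL (ρ g⁻¹) : M2) = X ↔ _
  rw [map_inv, map_inv, Units.mul_inv_eq_iff_eq_mul]
  rfl

lemma adRep_eq_one_of_eq_smul_one {g : G} {c : ℂ} (hc : (ρ g : M2) = c • 1) : adRep ρ g = 1 :=
  LinearMap.ext fun X => (adRep_apply_eq_self_iff ρ g X).2 (hc ▸ (Commute.one_left _).smul_left c)

lemma mem_ker_adRep_sub_one_iff (g : G) (X : sl2C) :
    X ∈ LinearMap.ker (adRep ρ g - 1) ↔ Commute (ρ g : M2) X := by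
  rw [LinearMap.mem_ker, LinearMap.sub_apply, Module.End.one_apply, sub_eq_zero,
    adRep_apply_eq_self_iff]

lemma finrank_ker_adRep_sub_one {g : G} (hg : ¬∃ c : ℂ, (ρ g : M2) = c • 1) :
    finrank ℂ (LinearMap.ker (adRep ρ g - 1)) = 1 := by
  set g₀ : M2 := ρ g - ((ρ g : M2).trace / 2) • 1
  have hg₀ : g₀ ∈ sl2C := by
    simp [sl2C, g₀, Matrix.trace_sub]
  have hker : LinearMap.ker (adRep ρ g - 1) = Submodule.span ℂ {⟨g₀, hg₀⟩} := by
    refine le_antisymm (fun X hX => ?_) ?_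
    · obtain ⟨t, ht⟩ := Matrix.exists_eq_smul_sub_trace_of_commute hg X.2
        ((mem_ker_adRep_sub_one_iff ρ g X).1 hX)
      exact Submodule.mem_span_singleton.2 ⟨t, Subtype.ext ht.symm⟩
    · rw [Submodule.span_le, Set.singleton_subset_iff, SetLike.mem_coe,
        mem_ker_adRep_sub_one_iff]
      exact (Commute.refl _).sub_right ((Commute.one_right _).smul_right _)
  rw [hker, finrank_span_singleton]
  intro h
  exact hg ⟨_, sub_eq_zero.1 (congrArg Subtype.val h)⟩

end adRep

namespace IrreducibleSL2

variable {G : Type} [Group G] {ρ : G →* SL2}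

lemma exists_eq_smul_one (hirr : IrreducibleSL2 ρ) {N : M2}
    (hN : ∀ g, Commute N (ρ g)) : ∃ c : ℂ, N = c • 1 := by
  by_contra hscalar
  obtain ⟨μ, hμ⟩ := Module.End.exists_eigenvalue (Matrix.toLin' N)
  set W := Module.End.eigenspace (Matrix.toLin' N) μ
  have hW_ne_top : W ≠ ⊤ := by
    intro htop
    refine hscalar ⟨μ, Matrix.toLin'.injective (LinearMap.ext fun v => ?_)⟩
    simpa using Module.End.mem_eigenspace_iff.1 (htop ▸ Submodule.mem_top : v ∈ W)
  have hW : finrank ℂ W = 1 := by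
    have hlt := Submodule.finrank_lt hW_ne_top
    have hpos : 0 < finrank ℂ W :=
      Module.finrank_pos_iff.2 (Submodule.nontrivial_iff_ne_bot.2 hμ)
    simp only [Module.finrank_fin_fun] at hlt
    omega
  refine hirr ⟨W, hW, fun g v hv => ?_⟩
  rw [Module.End.mem_eigenspace_iff] at hv ⊢
  simp only [Matrix.toLin'_apply] at hv ⊢
  rw [Matrix.mulVec_mulVec, (hN g).eq, ← Matrix.mulVec_mulVec, hv, Matrix.mulVec_smul]

end IrreducibleSL2

lemma commute_coe_of_closure_eq_top {G n R : Type*} [Group G] [Fintype n] [DecidableEq n]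
    [CommRing R] (ρ : G →* Matrix.SpecialLinearGroup n R) {s : Set G} (hs : Subgroup.closure s = ⊤)
    {N : Matrix n n R} (hN : ∀ g ∈ s, Commute N (ρ g)) (g : G) : Commute N (ρ g) := by
  have hg : g ∈ Subgroup.closure s := hs ▸ Subgroup.mem_top g
  induction hg using Subgroup.closure_induction with
  | mem x hx => exact hN x hx
  | one => simp
  | mul x y _ _ hx hy => simpa using hx.mul_right hy
  | inv x _ hx =>
    have h := (show Commute N (Matrix.SpecialLinearGroup.toGL (ρ x) : Matrix n n R) from hx).units_inv_right
    rwa [← map_inv, ← map_inv] at h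

namespace TorusGroup

open groupCohomology

section

variable {p q : ℤ} {ρ : TorusGroup p q →* SL2}
  (hirr : IrreducibleSL2 ρ)
include hirr

lemma exists_eq_smul_one_of_commute {N : M2} (ha : Commute N (ρ (a p q)))
    (hb : Commute N (ρ (b p q))) : ∃ c : ℂ, N = c • 1 :=
  hirr.exists_eq_smul_one <| commute_coe_of_closure_eq_top ρ (PresentedGroup.closure_range_of _) <|
    by simpa [Bool.forall_bool] using ⟨hb, ha⟩

lemma not_exists_coe_a_eq_smul_one : ¬∃ c : ℂ, (ρ (a p q) : M2) = c • 1 :=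
  Matrix.not_exists_eq_smul_one_of_forall_commute fun _ ha hb =>
    exists_eq_smul_one_of_commute hirr ha hb

lemma not_exists_coe_b_eq_smul_one : ¬∃ c : ℂ, (ρ (b p q) : M2) = c • 1 :=
  Matrix.not_exists_eq_smul_one_of_forall_commute fun _ hb ha =>
    exists_eq_smul_one_of_commute hirr ha hb

lemma ker_adRep_a_sub_one_inf_ker_adRep_b_sub_one :
    LinearMap.ker (adRep ρ (a p q) - 1) ⊓ LinearMap.ker (adRep ρ (b p q) - 1) = ⊥ := by
  refine (Submodule.eq_bot_iff _).2 fun X hX => ?_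
  rw [Submodule.mem_inf, mem_ker_adRep_sub_one_iff, mem_ker_adRep_sub_one_iff] at hX
  obtain ⟨c, hc⟩ := exists_eq_smul_one_of_commute hirr hX.1.symm hX.2.symm
  have htrace : (X : M2).trace = 0 := X.2
  rw [hc, Matrix.trace_smul, Matrix.trace_one] at htrace
  simp only [Fintype.card_fin, Nat.cast_ofNat, smul_eq_mul, mul_eq_zero, two_ne_zero,
    or_false] at htrace
  exact Subtype.ext (by simp [hc, htrace])

lemma invariants_adRep_eq_bot : (adRep ρ).invariants = ⊥ := by
  refine eq_bot_iff.2 fun X hX => ?_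
  rw [← ker_adRep_a_sub_one_inf_ker_adRep_b_sub_one hirr, Submodule.mem_inf]
  rw [Representation.mem_invariants] at hX
  simp [hX]

end

section

variable {m n : ℕ} {ρ : TorusGroup m n →* SL2}
  (hirr : IrreducibleSL2 ρ)
include hirr

lemma adRep_a_pow_eq_one : adRep ρ (a m n) ^ m = 1 := by
  rw [← map_pow]
  refine adRep_eq_one_of_eq_smul_one ρ (exists_eq_smul_one_of_commute hirr ?_ ?_).choose_spec
  · simp
  · rw [a_pow_eq_b_pow]
    simp

lemma adRep_b_pow_eq_one : adRep ρ (b m n) ^ n = 1 := by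
  rw [← map_pow]
  refine adRep_eq_one_of_eq_smul_one ρ (exists_eq_smul_one_of_commute hirr ?_ ?_).choose_spec
  · rw [← a_pow_eq_b_pow]
    simp
  · simp

end

lemma finrank_ker_foxMap_adRep {m n : ℕ} {ρ : TorusGroup m n →* SL2}
    (hirr : IrreducibleSL2 ρ) (hm : m ≠ 0) (hn : n ≠ 0) :
    finrank ℂ (LinearMap.ker (foxMap (Rep.of (adRep ρ)))) = 4 := by
  have hrange : LinearMap.range (foxMap (Rep.of (adRep ρ))) =
      LinearMap.ker (adRep ρ (a m n) - 1) ⊔ LinearMap.ker (adRep ρ (b m n) - 1) := by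
    rw [foxMap, LinearMap.range_coprod, LinearMap.range_neg, Rep.of_ρ,
      Module.End.range_geom_sum_eq_ker_sub_one _ hm (adRep_a_pow_eq_one hirr),
      Module.End.range_geom_sum_eq_ker_sub_one _ hn (adRep_b_pow_eq_one hirr)]
  have hrank : finrank ℂ (LinearMap.range (foxMap (Rep.of (adRep ρ)))) = 2 := by
    have h := Submodule.finrank_sup_add_finrank_inf_eq
      (LinearMap.ker (adRep ρ (a m n) - 1)) (LinearMap.ker (adRep ρ (b m n) - 1))
    rw [ker_adRep_a_sub_one_inf_ker_adRep_b_sub_one hirr, finrank_bot,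
      finrank_ker_adRep_sub_one ρ (not_exists_coe_a_eq_smul_one hirr),
      finrank_ker_adRep_sub_one ρ (not_exists_coe_b_eq_smul_one hirr)] at h
    rw [hrange, ← add_zero (finrank ℂ _), h]
  have h := LinearMap.finrank_range_add_finrank_ker (foxMap (Rep.of (adRep ρ)))
  rw [hrank, Module.finrank_prod] at h
  have h3 : finrank ℂ (Rep.of (adRep ρ)) = 3 := finrank_sl2C
  omega

end TorusGroup

open groupCohomology in
theorem h1_adjoint_one_dimensional_general (p q : ℤ) (hp : 2 ≤ p) (hq : 2 ≤ q)
    (ρ : TorusGroup p q →* Matrix.SpecialLinearGroup (Fin 2) ℂ)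
    (hirr : IrreducibleSL2 ρ) :
    Module.finrank ℂ (groupCohomology.H1 (Rep.of (adRep ρ))) = 1 := by
  lift p to ℕ using (by omega)
  lift q to ℕ using (by omega)
  have : FiniteDimensional ℂ (cocycles₁ (Rep.of (adRep ρ))) :=
    Module.Finite.of_injective _ (TorusGroup.evalGenerators_injective _)
  have h := finrank_H1_add_finrank_coboundaries₁ (Rep.of (adRep ρ))
  rw [finrank_coboundaries₁_of_invariants_eq_bot _ (TorusGroup.invariants_adRep_eq_bot hirr),
    TorusGroup.finrank_cocycles₁_eq_finrank_ker_foxMap,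
    TorusGroup.finrank_ker_foxMap_adRep hirr (by omega) (by omega)] at h
  have h3 : finrank ℂ (Rep.of (adRep ρ)) = 3 := finrank_sl2C
  omega

/-- Every irreducible `SL(2,ℂ)`-representation of the torus knot group
`Π = ⟨a, b | a^p = b^q⟩` is regular: the first group cohomology of `Π` with
coefficients in the adjoint representation on `𝔰𝔩₂(ℂ)` is one-dimensional. -/
theorem h1_adjoint_one_dimensional (p q : ℤ) (hp : 2 ≤ p) (hq : 2 ≤ q)
    (hpq : IsCoprime p q)
    (ρ : TorusGroup p q →* Matrix.SpecialLinearGroup (Fin 2) ℂ)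
    (hirr : IrreducibleSL2 ρ) :
    Module.finrank ℂ (groupCohomology.H1 (Rep.of (adRep ρ))) = 1 :=
  h1_adjoint_one_dimensional_general p q hp hq ρ hirr
end

section
/- Let q ≥ 3 be an odd integer and let Π be the group with presentation ⟨a, b | w a = b w⟩ where w = (ab)^{(q−1)/2}. Define polynomials Φ_j ∈ ℤ[y] for odd j by Φ₁ = 1, Φ₃ = y − 1, and Φ_j = y·Φ_{j−2} − Φ_{j−4} for odd j ≥ 5. If ρ : Π → SL(2, ℂ) is a representation whose induced action on ℂ² is irreducible, then Φ_q(tr(ρ(a)·ρ(b))) = 0. -/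
/-- The word `w = (ab)^{(q-1)/2}` in the free group on generators `a = of true`,
`b = of false`. -/
def twoBridgeWord (q : ℤ) : FreeGroup Bool :=
  (FreeGroup.of true * FreeGroup.of false) ^ ((q - 1) / 2)

/-- The single relation `(w a)(b w)⁻¹` of the two-bridge presentation
`⟨a, b | w a = b w⟩` of the `(2,q)` torus knot group. -/
def twoBridgeRels (q : ℤ) : Set (FreeGroup Bool) :=
  {twoBridgeWord q * FreeGroup.of true * (FreeGroup.of false * twoBridgeWord q)⁻¹}

/-- The polynomials `Φ` indexed so that `Φ_j` (for odd `j = 2n+1`) is `phi n`: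
`Φ₁ = 1`, `Φ₃ = y - 1`, `Φ_j = y Φ_{j-2} - Φ_{j-4}`. -/
noncomputable def phi : ℕ → Polynomial ℤ
  | 0 => 1
  | 1 => Polynomial.X - 1
  | n + 2 => Polynomial.X * phi (n + 1) - phi n

namespace TwoQAux

open Matrix Polynomial

/-- Chebyshev-like sequence `u y k = S_{k-1}(y)`. -/
noncomputable def u (y : ℂ) : ℕ → ℂ
  | 0 => 0
  | 1 => 1
  | n + 2 => y * u y (n + 1) - u y n

lemma aeval_phi (y : ℂ) (n : ℕ) :
    Polynomial.aeval y (phi n) = u y (n + 1) - u y n := by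
  induction n using Nat.twoStepInduction with
  | zero => simp [phi, u]
  | one => simp [phi, u]
  | more n ih1 ih2 =>
    have hu : u y (n + 3) = y * u y (n + 2) - u y (n + 1) := rfl
    have hu2 : u y (n + 2) = y * u y (n + 1) - u y n := rfl
    show Polynomial.aeval y (Polynomial.X * phi (n + 1) - phi n) = _
    rw [map_sub, _root_.map_mul, aeval_X, ih1, ih2, hu, hu2]
    ring

/-- Cayley–Hamilton for a `2×2` matrix of determinant 1. -/
lemma ch2 (M : Matrix (Fin 2) (Fin 2) ℂ) (h : M.det = 1) :
    M * M = M.trace • M - 1 := by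
  rw [Matrix.det_fin_two] at h
  ext i j
  fin_cases i <;> fin_cases j <;>
    simp [Matrix.mul_apply, Fin.sum_univ_two, Matrix.trace_fin_two, Matrix.one_apply] <;>
    first
    | ring1
    | linear_combination (-1 : ℂ) * h

/-- The key trace identity `ABA - BAB = (tr(AB) - 1)(A - B)` for matrices of
determinant 1 with equal traces. -/
lemma key (A B : Matrix (Fin 2) (Fin 2) ℂ) (hA : A.det = 1) (hB : B.det = 1)
    (ht : A.trace = B.trace) :
    A * B * A - B * (A * B) = ((A * B).trace - 1) • (A - B) := by
  rw [Matrix.det_fin_two] at hA hB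
  simp only [Matrix.trace_fin_two] at ht
  ext i j
  fin_cases i <;> fin_cases j <;>
    simp [Matrix.mul_apply, Fin.sum_univ_two, Matrix.trace_fin_two]
  · linear_combination (B 0 0 - A 0 0 - A 1 1) * hA + A 1 1 * hB +
      (A 0 0 * A 1 1 - A 0 1 * A 1 0) * ht
  · linear_combination B 0 1 * hA - A 0 1 * hB
  · linear_combination B 1 0 * hA - A 1 0 * hB
  · linear_combination (-(B 0 0)) * hA + A 0 0 * hB + ht

lemma pow_u (M : Matrix (Fin 2) (Fin 2) ℂ) (y : ℂ) (h : M * M = y • M - 1) :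
    ∀ n : ℕ, M ^ (n + 1) = u y (n + 1) • M - u y n • 1 := by
  intro n
  induction n with
  | zero => simp [u]
  | succ n ih =>
    have hu : u y (n + 2) = y * u y (n + 1) - u y n := rfl
    rw [pow_succ, ih, sub_mul, smul_mul_assoc, smul_mul_assoc, one_mul, h, hu]
    module

end TwoQAux

open Matrix Polynomial TwoQAux in
/-- If `ρ` is an irreducible `SL(2,ℂ)`-representation of the two-bridge presentation
`⟨a, b | w a = b w⟩`, `w = (ab)^{(q-1)/2}`, of the `(2,q)` torus knot group (`q ≥ 3`
odd), then `Φ_q(tr ρ(ab)) = 0`. -/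
theorem nonabelian_character_variety_two_q (q : ℤ) (hq : 3 ≤ q) (hodd : Odd q)
    (ρ : PresentedGroup (twoBridgeRels q) →* Matrix.SpecialLinearGroup (Fin 2) ℂ)
    (hirr : IrreducibleSL2 ρ) :
    Polynomial.aeval
        (Matrix.trace
          ((ρ (PresentedGroup.of true) * ρ (PresentedGroup.of false) :
              Matrix.SpecialLinearGroup (Fin 2) ℂ) : Matrix (Fin 2) (Fin 2) ℂ))
        (phi ((q - 1) / 2).toNat) = 0 := by
  classical
  set gA := ρ (PresentedGroup.of true) with hgA
  set gB := ρ (PresentedGroup.of false) with hgB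
  set A : Matrix (Fin 2) (Fin 2) ℂ := ((gA : Matrix.SpecialLinearGroup (Fin 2) ℂ) : Matrix (Fin 2) (Fin 2) ℂ) with hA
  set B : Matrix (Fin 2) (Fin 2) ℂ := ((gB : Matrix.SpecialLinearGroup (Fin 2) ℂ) : Matrix (Fin 2) (Fin 2) ℂ) with hB
  have hm : 1 ≤ ((q - 1) / 2).toNat := by omega
  have he : ((q - 1) / 2 : ℤ) = (((q - 1) / 2).toNat : ℤ) := (Int.toNat_of_nonneg (by omega)).symm
  set m := ((q - 1) / 2).toNat with hmdef
  -- the relation at the level of the presented group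
  have h2 : (PresentedGroup.of true * PresentedGroup.of false : PresentedGroup (twoBridgeRels q)) ^ m
      * PresentedGroup.of true
      = PresentedGroup.of false * (PresentedGroup.of true * PresentedGroup.of false) ^ m := by
    have h1 : PresentedGroup.mk (twoBridgeRels q)
        (twoBridgeWord q * FreeGroup.of true * (FreeGroup.of false * twoBridgeWord q)⁻¹) = 1 :=
      (QuotientGroup.eq_one_iff _).2 (Subgroup.subset_normalClosure rfl)
    simp only [_root_.map_mul, _root_.map_inv] at h1
    have h1' := mul_inv_eq_one.mp h1
    have h3 : PresentedGroup.mk (twoBridgeRels q) (twoBridgeWord q)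
        = (PresentedGroup.of true * PresentedGroup.of false) ^ m := by
      show PresentedGroup.mk (twoBridgeRels q)
        ((FreeGroup.of true * FreeGroup.of false) ^ ((q - 1) / 2)) = _
      rw [map_zpow, _root_.map_mul, he, zpow_natCast]
      rfl
    rw [h3] at h1'
    exact h1'
  -- the relation in SL(2,C)
  have hrel : (gA * gB) ^ m * gA = gB * (gA * gB) ^ m := by
    have h4 := congrArg ρ h2
    simpa only [_root_.map_mul, _root_.map_pow, ← hgA, ← hgB] using h4
  have hmat : (A * B) ^ m * A = B * (A * B) ^ m := by
    have h5 := congrArg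
      (fun g : Matrix.SpecialLinearGroup (Fin 2) ℂ => (g : Matrix (Fin 2) (Fin 2) ℂ)) hrel
    simpa only [Matrix.SpecialLinearGroup.coe_mul, Matrix.SpecialLinearGroup.coe_pow,
      ← hA, ← hB] using h5
  -- trace of A equals trace of B
  have hdetA : A.det = 1 := gA.prop
  have hdetB : B.det = 1 := gB.prop
  set Wi : Matrix (Fin 2) (Fin 2) ℂ :=
    ((((gA * gB) ^ m)⁻¹ : Matrix.SpecialLinearGroup (Fin 2) ℂ) : Matrix (Fin 2) (Fin 2) ℂ)
    with hWi
  have hcoeW : (A * B) ^ m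
      = (((gA * gB) ^ m : Matrix.SpecialLinearGroup (Fin 2) ℂ) : Matrix (Fin 2) (Fin 2) ℂ) := by
    rw [Matrix.SpecialLinearGroup.coe_pow, Matrix.SpecialLinearGroup.coe_mul, ← hA, ← hB]
  have hWW : Wi * (A * B) ^ m = 1 := by
    rw [hcoeW, hWi, ← Matrix.SpecialLinearGroup.coe_mul, inv_mul_cancel,
      Matrix.SpecialLinearGroup.coe_one]
  have hWW2 : (A * B) ^ m * Wi = 1 := by
    rw [hcoeW, hWi, ← Matrix.SpecialLinearGroup.coe_mul, mul_inv_cancel,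
      Matrix.SpecialLinearGroup.coe_one]
  have htr : A.trace = B.trace := by
    have hBeq : B = (A * B) ^ m * A * Wi := by
      rw [hmat, mul_assoc, hWW2, mul_one]
    rw [hBeq, Matrix.trace_mul_comm, ← mul_assoc, hWW, one_mul]
  -- A ≠ B from irreducibility
  have hne : A ≠ B := by
    intro hAB
    apply hirr
    obtain ⟨c, hc⟩ := Module.End.exists_eigenvalue (Matrix.toLin' A)
    obtain ⟨v, hv⟩ := hc.exists_hasEigenvector
    have hv0 : v ≠ 0 := hv.right
    have hAv : A.mulVec v = c • v := by
      have h6 := hv.apply_eq_smul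
      rwa [Matrix.toLin'_apply] at h6
    have hinvmul : ∀ g : PresentedGroup (twoBridgeRels q),
        ((ρ g⁻¹ : Matrix.SpecialLinearGroup (Fin 2) ℂ) : Matrix (Fin 2) (Fin 2) ℂ)
        * ((ρ g : Matrix.SpecialLinearGroup (Fin 2) ℂ) : Matrix (Fin 2) (Fin 2) ℂ) = 1 := by
      intro g
      rw [← Matrix.SpecialLinearGroup.coe_mul, ← _root_.map_mul, inv_mul_cancel, _root_.map_one,
        Matrix.SpecialLinearGroup.coe_one]
    have hc0 : c ≠ 0 := by
      intro h0
      apply hv0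
      have h7 : ((ρ (PresentedGroup.of true)⁻¹ : Matrix.SpecialLinearGroup (Fin 2) ℂ) :
          Matrix (Fin 2) (Fin 2) ℂ).mulVec (A.mulVec v) = v := by
        rw [Matrix.mulVec_mulVec, hinvmul, Matrix.one_mulVec]
      rw [hAv, h0, zero_smul, Matrix.mulVec_zero] at h7
      exact h7.symm
    have hgen : ∀ g : PresentedGroup (twoBridgeRels q), ∃ d : ℂ, d ≠ 0 ∧
        ((ρ g : Matrix.SpecialLinearGroup (Fin 2) ℂ) : Matrix (Fin 2) (Fin 2) ℂ).mulVec v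
          = d • v := by
      intro g
      have hg : g ∈ Subgroup.closure
          (Set.range (PresentedGroup.of : Bool → PresentedGroup (twoBridgeRels q))) := by
        rw [PresentedGroup.closure_range_of]; trivial
      induction hg using Subgroup.closure_induction with
      | mem x hx =>
        obtain ⟨b, rfl⟩ := hx
        cases b
        · exact ⟨c, hc0, by rw [← hgB, ← hB, ← hAB]; exact hAv⟩
        · exact ⟨c, hc0, by rw [← hgA, ← hA]; exact hAv⟩
      | one => exact ⟨1, one_ne_zero, by simp⟩
      | mul x y hx hy ihx ihy =>
        obtain ⟨d1, hd1, hdx⟩ := ihx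
        obtain ⟨d2, hd2, hdy⟩ := ihy
        refine ⟨d1 * d2, mul_ne_zero hd1 hd2, ?_⟩
        rw [_root_.map_mul, Matrix.SpecialLinearGroup.coe_mul, ← Matrix.mulVec_mulVec, hdy,
          Matrix.mulVec_smul, hdx, smul_smul, mul_comm]
      | inv x hx ihx =>
        obtain ⟨d, hd, hdx⟩ := ihx
        refine ⟨d⁻¹, inv_ne_zero hd, ?_⟩
        have h8 : ((ρ x⁻¹ : Matrix.SpecialLinearGroup (Fin 2) ℂ) :
            Matrix (Fin 2) (Fin 2) ℂ).mulVec (d • v) = v := by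
          rw [← hdx, Matrix.mulVec_mulVec, hinvmul, Matrix.one_mulVec]
        rw [Matrix.mulVec_smul] at h8
        rw [eq_comm, ← inv_smul_eq_iff₀ hd] at h8
        rw [← h8]
    refine ⟨Submodule.span ℂ {v}, finrank_span_singleton hv0, ?_⟩
    intro g x hx
    obtain ⟨e, rfl⟩ := Submodule.mem_span_singleton.mp hx
    obtain ⟨d, _, hd⟩ := hgen g
    rw [Matrix.mulVec_smul, hd, smul_smul]
    exact Submodule.smul_mem _ _ (Submodule.mem_span_singleton_self v)
  -- the character variety computation
  set y : ℂ := (A * B).trace with hy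
  have hdetAB : (A * B).det = 1 := by rw [Matrix.det_mul, hdetA, hdetB, one_mul]
  have hch : (A * B) * (A * B) = y • (A * B) - 1 := ch2 (A * B) hdetAB
  have hpow := pow_u (A * B) y hch
  obtain ⟨k, hk⟩ : ∃ k, m = k + 1 := ⟨m - 1, by omega⟩
  have hkk : A * B * A = B * (A * B) + (y - 1) • (A - B) := by
    have := key A B hdetA hdetB htr
    rw [← hy] at this
    rw [← this]
    abel
  have hzero : (u y (k + 1) * (y - 1) - u y k) • (A - B) = 0 := by
    have h9 : (u y (k + 1) * (y - 1) - u y k) • (A - B)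
        = (A * B) ^ (k + 1) * A - B * (A * B) ^ (k + 1) := by
      rw [hpow k]
      rw [show (u y (k + 1) • (A * B) - u y k • (1 : Matrix (Fin 2) (Fin 2) ℂ)) * A
          = u y (k + 1) • (A * B * A) - u y k • A from by
        rw [sub_mul, smul_mul_assoc, smul_mul_assoc, one_mul]]
      rw [show B * (u y (k + 1) • (A * B) - u y k • (1 : Matrix (Fin 2) (Fin 2) ℂ))
          = u y (k + 1) • (B * (A * B)) - u y k • B from by
        rw [mul_sub, mul_smul_comm, mul_smul_comm, mul_one]]
      rw [hkk]
      module
    rw [h9, ← hk, hmat, sub_self]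
  have hscal : u y (k + 1) * (y - 1) - u y k = 0 := by
    rcases smul_eq_zero.mp hzero with h | h
    · exact h
    · exact absurd (sub_eq_zero.mp h) hne
  -- conclude
  have hgoal : Polynomial.aeval y (phi m) = 0 := by
    rw [hk, aeval_phi]
    have hu : u y (k + 1 + 1) = y * u y (k + 1) - u y k := rfl
    rw [hu]
    linear_combination hscal
  have hcoe : ((ρ (PresentedGroup.of true) * ρ (PresentedGroup.of false) :
      Matrix.SpecialLinearGroup (Fin 2) ℂ) : Matrix (Fin 2) (Fin 2) ℂ) = A * B := by
    rw [Matrix.SpecialLinearGroup.coe_mul, ← hgA, ← hgB, hA, hB]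
  rw [hcoe]
  exact hgoal
end
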